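/- For the quadratic quasi-Newton scheme (x_{k+1} = x_k - G_k⁻¹∇f(x_k), G₀ = LB, G_{k+1} = Broyd_{φ_k}(A,G_k,u_k), φ_k ∈ [0,1], with μB ⪯ A ⪯ LB), for all k ≥ 1: λ_f(x_k) ≤ [∏_{i=0}^{k-1}(φ_i μ/L + 1 - φ_i)]^{-1/2} · (nL/(μk))^{k/2} · λ_f(x₀). In particular, for BFGS (all φ_i = 0), λ_f(x_k) ≤ (nL/(μk))^{k/2} λ_f(x₀). -/

import Mathlib

open Matrix

noncomputable def DFPupd {n : ℕ} (A G : Matrix (Fin n) (Fin n) ℝ) (u : Fin n → ℝ) :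
    Matrix (Fin n) (Fin n) ℝ :=
  G - ((u ⬝ᵥ A.mulVec u)⁻¹) •
      (vecMulVec (A.mulVec u) (G.mulVec u) + vecMulVec (G.mulVec u) (A.mulVec u))
    + (((u ⬝ᵥ G.mulVec u) / (u ⬝ᵥ A.mulVec u) + 1) * (u ⬝ᵥ A.mulVec u)⁻¹) •
      vecMulVec (A.mulVec u) (A.mulVec u)

noncomputable def BFGSupd {n : ℕ} (A G : Matrix (Fin n) (Fin n) ℝ) (u : Fin n → ℝ) :
    Matrix (Fin n) (Fin n) ℝ :=
  G - ((u ⬝ᵥ G.mulVec u)⁻¹) • vecMulVec (G.mulVec u) (G.mulVec u)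
    + ((u ⬝ᵥ A.mulVec u)⁻¹) • vecMulVec (A.mulVec u) (A.mulVec u)

noncomputable def Broyd {n : ℕ} (φ : ℝ) (A G : Matrix (Fin n) (Fin n) ℝ) (u : Fin n → ℝ) :
    Matrix (Fin n) (Fin n) ℝ :=
  if u = 0 then G else φ • DFPupd A G u + (1 - φ) • BFGSupd A G u

/-- Closeness measure θ(A, G, u). -/
noncomputable def theta {n : ℕ} (A G : Matrix (Fin n) (Fin n) ℝ) (u : Fin n → ℝ) : ℝ :=
  if u = 0 then 0 else
    Real.sqrt ((u ⬝ᵥ ((G - A) * A⁻¹ * (G - A)).mulVec u) /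
      (u ⬝ᵥ (G * A⁻¹ * G).mulVec u))

/-- Trace potential σ(A, G). -/
noncomputable def sigmaPot {n : ℕ} (A G : Matrix (Fin n) (Fin n) ℝ) : ℝ :=
  (A⁻¹ * (G - A)).trace

/-- Byrd–Nocedal potential ψ(A, G). -/
noncomputable def psiPot {n : ℕ} (A G : Matrix (Fin n) (Fin n) ℝ) : ℝ :=
  (A⁻¹ * (G - A)).trace - Real.log (A⁻¹ * G).det

noncomputable def omegaFn (t : ℝ) : ℝ := t - Real.log (1 + t)

/-- Gradient norm λ_f(x) = ‖∇f(x)‖_{A⁻¹} for the quadratic f(x) = ½xᵀAx - bᵀx. -/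
noncomputable def lamQ {n : ℕ} (A : Matrix (Fin n) (Fin n) ℝ) (b x : Fin n → ℝ) : ℝ :=
  Real.sqrt ((A.mulVec x - b) ⬝ᵥ A⁻¹.mulVec (A.mulVec x - b))

/-!
The Hessian approximations stay in the Loewner interval `A ≤ G k ≤ (L / μ) • A`, and a Broyden
step lowers the trace potential `σ(A, G) = tr (A⁻¹ (G - A))` by at least
`(φ μ / L + 1 - φ) θ²`, where `θ = λ_f(x_{k+1}) / λ_f(x_k)`. As `σ` starts below `n L / μ` and
stays nonnegative, `∑ (φ_i μ / L + 1 - φ_i) θ_i² ≤ n L / μ`, and the AM-GM inequality turns this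
bound on a sum into the bound on the product `λ_f(x_k) / λ_f(x_0) = ∏ θ_i`.
-/

open scoped MatrixOrder

namespace Matrix

section QuadraticForm

variable {ι : Type*} {A M N : Matrix ι ι ℝ}

lemma IsHermitian.of_le (hA : A.IsHermitian) (h : A ≤ M) : M.IsHermitian := by
  simpa using hA.add (le_iff.mp h).isHermitian

lemma PosDef.of_le (hA : A.PosDef) (h : A ≤ M) : M.PosDef := by
  simpa using hA.add_posSemidef (le_iff.mp h)

variable [Fintype ι]

lemma dotProduct_vecMulVec_mulVec (a b v w : ι → ℝ) :
    v ⬝ᵥ vecMulVec a b *ᵥ w = (v ⬝ᵥ a) * (b ⬝ᵥ w) := by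
  rw [vecMulVec_mulVec, op_smul_eq_smul, dotProduct_smul, smul_eq_mul, mul_comm]

lemma inv_mulVec_mulVec_cancel [DecidableEq ι] (hA : IsUnit A.det) (v : ι → ℝ) :
    A⁻¹ *ᵥ (A *ᵥ v) = v := by
  rw [mulVec_mulVec, nonsing_inv_mul A hA, one_mulVec]

lemma PosSemidef.dotProduct_mulVec_self_nonneg (hM : M.PosSemidef) (v : ι → ℝ) :
    0 ≤ v ⬝ᵥ M *ᵥ v := by
  simpa using hM.dotProduct_mulVec_nonneg v

lemma dotProduct_mulVec_le_of_le (h : M ≤ N) (v : ι → ℝ) : v ⬝ᵥ M *ᵥ v ≤ v ⬝ᵥ N *ᵥ v := by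
  have := (le_iff.mp h).dotProduct_mulVec_self_nonneg v
  rw [sub_mulVec, dotProduct_sub] at this
  linarith

lemma le_of_dotProduct_mulVec_le (hM : M.IsHermitian) (hN : N.IsHermitian)
    (h : ∀ v, v ⬝ᵥ M *ᵥ v ≤ v ⬝ᵥ N *ᵥ v) : M ≤ N :=
  le_iff.mpr <| .of_dotProduct_mulVec_nonneg (hN.sub hM) fun v => by
    simpa [sub_mulVec] using h v

lemma IsHermitian.dotProduct_mulVec_comm (hM : M.IsHermitian) (v w : ι → ℝ) :
    v ⬝ᵥ M *ᵥ w = w ⬝ᵥ M *ᵥ v := by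
  rw [← dotProduct_transpose_mulVec, (isHermitian_iff_isSymm.mp hM).eq]

lemma IsHermitian.dotProduct_mul_mul_mulVec (hM : M.IsHermitian) (C : Matrix ι ι ℝ)
    (v : ι → ℝ) : v ⬝ᵥ (M * C * M) *ᵥ v = (M *ᵥ v) ⬝ᵥ C *ᵥ (M *ᵥ v) := by
  rw [← mulVec_mulVec, ← mulVec_mulVec, hM.dotProduct_mulVec_comm, dotProduct_comm]

lemma IsHermitian.dotProduct_mulVec_sub_smul (hM : M.IsHermitian) (v u : ι → ℝ) (t : ℝ) :
    (v - t • u) ⬝ᵥ M *ᵥ (v - t • u)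
      = v ⬝ᵥ M *ᵥ v - 2 * t * (v ⬝ᵥ M *ᵥ u) + t ^ 2 * (u ⬝ᵥ M *ᵥ u) := by
  simp only [mulVec_sub, mulVec_smul, dotProduct_sub, sub_dotProduct, smul_dotProduct,
    dotProduct_smul, smul_eq_mul, hM.dotProduct_mulVec_comm u v]
  ring

lemma PosSemidef.dotProduct_mulVec_sq_le (hM : M.PosSemidef) (v w : ι → ℝ) :
    (v ⬝ᵥ M *ᵥ w) ^ 2 ≤ (v ⬝ᵥ M *ᵥ v) * (w ⬝ᵥ M *ᵥ w) := by
  have hquad : ∀ t : ℝ,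
      0 ≤ (v ⬝ᵥ M *ᵥ v) * (t * t) + (-2 * (v ⬝ᵥ M *ᵥ w)) * t + (w ⬝ᵥ M *ᵥ w) := fun t => by
    have := hM.dotProduct_mulVec_self_nonneg (w - t • v)
    rw [hM.isHermitian.dotProduct_mulVec_sub_smul, hM.isHermitian.dotProduct_mulVec_comm w v]
      at this
    linarith
  have := discrim_le_zero hquad
  rw [discrim] at this
  linarith

lemma sq_dotProduct_mulVec_le_of_le_smul (hM : 0 ≤ M) {c : ℝ} (hMA : M ≤ c • A) (v w : ι → ℝ) :
    (v ⬝ᵥ M *ᵥ w) ^ 2 ≤ c * (v ⬝ᵥ M *ᵥ v) * (w ⬝ᵥ A *ᵥ w) := by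
  have hM' := nonneg_iff_posSemidef.mp hM
  have hw := dotProduct_mulVec_le_of_le hMA w
  rw [smul_mulVec, dotProduct_smul, smul_eq_mul] at hw
  nlinarith [hM'.dotProduct_mulVec_sq_le v w, hM'.dotProduct_mulVec_self_nonneg v]

/-- If `0 ≤ M ≤ c • A` then `M A⁻¹ M ≤ c • M`. -/
lemma dotProduct_inv_mulVec_le [DecidableEq ι] (hA : A.PosDef) (hM : 0 ≤ M) {c : ℝ}
    (hc : 0 ≤ c) (hMA : M ≤ c • A) (v : ι → ℝ) :
    (M *ᵥ v) ⬝ᵥ A⁻¹ *ᵥ (M *ᵥ v) ≤ c * (v ⬝ᵥ M *ᵥ v) := by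
  set w := A⁻¹ *ᵥ (M *ᵥ v)
  have hAw : A *ᵥ w = M *ᵥ v := by
    rw [mulVec_mulVec, mul_nonsing_inv _ ((isUnit_iff_isUnit_det A).mp hA.isUnit), one_mulVec]
  have hlhs : (M *ᵥ v) ⬝ᵥ w = w ⬝ᵥ A *ᵥ w := by rw [hAw, dotProduct_comm]
  have hvMw : v ⬝ᵥ M *ᵥ w = w ⬝ᵥ A *ᵥ w := by
    rw [(nonneg_iff_posSemidef.mp hM).isHermitian.dotProduct_mulVec_comm, hAw]
  have hCS := sq_dotProduct_mulVec_le_of_le_smul hM hMA v w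
  rw [hvMw] at hCS
  rw [hlhs]
  rcases (hA.posSemidef.dotProduct_mulVec_self_nonneg w).eq_or_lt with h0 | hpos
  · rw [← h0]
    exact mul_nonneg hc ((nonneg_iff_posSemidef.mp hM).dotProduct_mulVec_self_nonneg v)
  · nlinarith

lemma trace_inv_mul_nonneg [DecidableEq ι] (hA : A.PosDef) (hM : 0 ≤ M) :
    0 ≤ (A⁻¹ * M).trace := by
  set S := CFC.sqrt A⁻¹
  have hSS : S * S = A⁻¹ := CFC.sqrt_mul_sqrt_self A⁻¹ hA.inv.posSemidef.nonneg
  have hS : S.IsHermitian := (CFC.sqrt_nonneg A⁻¹).posSemidef.isHermitian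
  have htrace : (A⁻¹ * M).trace = (S * M * Sᴴ).trace := by
    rw [hS.eq, ← hSS, Matrix.mul_assoc, trace_mul_comm S (S * M)]
  rw [htrace]
  exact ((nonneg_iff_posSemidef.mp hM).mul_mul_conjTranspose_same S).trace_nonneg

end QuadraticForm

section Projection

variable {ι : Type*} [Fintype ι] {M : Matrix ι ι ℝ} {u : ι → ℝ}

/-- The `M`-orthogonal projection of `v` onto the `M`-orthogonal complement of `u`. -/
noncomputable def perpProj (M : Matrix ι ι ℝ) (u v : ι → ℝ) : ι → ℝ :=
  v - ((v ⬝ᵥ M *ᵥ u) / (u ⬝ᵥ M *ᵥ u)) • u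

lemma IsHermitian.dotProduct_mulVec_sub_smul_eq_perpProj (hM : M.IsHermitian)
    (hu : u ⬝ᵥ M *ᵥ u ≠ 0) (v : ι → ℝ) (t : ℝ) :
    (v - t • u) ⬝ᵥ M *ᵥ (v - t • u) = perpProj M u v ⬝ᵥ M *ᵥ perpProj M u v
      + (u ⬝ᵥ M *ᵥ u) * (t - (v ⬝ᵥ M *ᵥ u) / (u ⬝ᵥ M *ᵥ u)) ^ 2 := by
  rw [perpProj, hM.dotProduct_mulVec_sub_smul, hM.dotProduct_mulVec_sub_smul]
  field_simp
  ring

lemma IsHermitian.dotProduct_mulVec_eq_perpProj_add (hM : M.IsHermitian)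
    (hu : u ⬝ᵥ M *ᵥ u ≠ 0) (v : ι → ℝ) :
    v ⬝ᵥ M *ᵥ v = perpProj M u v ⬝ᵥ M *ᵥ perpProj M u v
      + (v ⬝ᵥ M *ᵥ u) ^ 2 / (u ⬝ᵥ M *ᵥ u) := by
  have := hM.dotProduct_mulVec_sub_smul_eq_perpProj hu v 0
  rw [zero_smul, sub_zero] at this
  rw [this]
  field_simp
  ring

lemma IsHermitian.dotProduct_perpProj_le (hM : M.IsHermitian) (hu : 0 < u ⬝ᵥ M *ᵥ u)
    (v : ι → ℝ) (t : ℝ) :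
    perpProj M u v ⬝ᵥ M *ᵥ perpProj M u v ≤ (v - t • u) ⬝ᵥ M *ᵥ (v - t • u) := by
  rw [hM.dotProduct_mulVec_sub_smul_eq_perpProj hu.ne']
  exact le_add_of_nonneg_right (by positivity)

end Projection

end Matrix

section Updates

variable {n : ℕ} {A G : Matrix (Fin n) (Fin n) ℝ} {u : Fin n → ℝ} {η : ℝ}

lemma DFPupd_isHermitian (hG : G.IsHermitian) : (DFPupd A G u).IsHermitian := by
  simp only [IsHermitian, DFPupd, conjTranspose_sub, conjTranspose_add, conjTranspose_smul,
    conjTranspose_vecMulVec, star_trivial, hG.eq, add_comm (vecMulVec (G *ᵥ u) _)]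

lemma BFGSupd_isHermitian (hG : G.IsHermitian) : (BFGSupd A G u).IsHermitian := by
  simp only [IsHermitian, BFGSupd, conjTranspose_sub, conjTranspose_add, conjTranspose_smul,
    conjTranspose_vecMulVec, star_trivial, hG.eq]

lemma dotProduct_DFPupd_mulVec (hG : G.IsHermitian) (hu : u ⬝ᵥ A *ᵥ u ≠ 0) (v : Fin n → ℝ) :
    v ⬝ᵥ DFPupd A G u *ᵥ v = perpProj A u v ⬝ᵥ G *ᵥ perpProj A u v
      + (v ⬝ᵥ A *ᵥ u) ^ 2 / (u ⬝ᵥ A *ᵥ u) := by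
  simp only [DFPupd, perpProj, hG.dotProduct_mulVec_sub_smul, sub_mulVec, add_mulVec,
    smul_mulVec, dotProduct_sub, dotProduct_add, dotProduct_smul, smul_eq_mul,
    dotProduct_vecMulVec_mulVec, dotProduct_comm (G *ᵥ u) v, dotProduct_comm (A *ᵥ u) v]
  field_simp
  ring

lemma dotProduct_BFGSupd_mulVec (hG : G.IsHermitian) (hu : u ⬝ᵥ G *ᵥ u ≠ 0) (v : Fin n → ℝ) :
    v ⬝ᵥ BFGSupd A G u *ᵥ v = perpProj G u v ⬝ᵥ G *ᵥ perpProj G u v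
      + (v ⬝ᵥ A *ᵥ u) ^ 2 / (u ⬝ᵥ A *ᵥ u) := by
  simp only [BFGSupd, sub_mulVec, add_mulVec, smul_mulVec, dotProduct_sub, dotProduct_add,
    dotProduct_smul, smul_eq_mul, dotProduct_vecMulVec_mulVec, dotProduct_comm (G *ᵥ u) v,
    dotProduct_comm (A *ᵥ u) v, hG.dotProduct_mulVec_eq_perpProj_add hu v]
  ring

lemma DFPupd_mem_Icc (hA : A.PosDef) (hAG : A ≤ G) (hGA : G ≤ η • A) (hη : 1 ≤ η)
    (hu : u ≠ 0) : DFPupd A G u ∈ Set.Icc A (η • A) := by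
  have hG := hA.isHermitian.of_le hAG
  have hr : 0 < u ⬝ᵥ A *ᵥ u := by simpa using hA.dotProduct_mulVec_pos hu
  have hDFP := DFPupd_isHermitian (A := A) (u := u) hG
  refine ⟨le_of_dotProduct_mulVec_le hA.isHermitian hDFP fun v => ?_,
    le_of_dotProduct_mulVec_le hDFP (hA.isHermitian.smul (.all η)) fun v => ?_⟩ <;>
  · have hsq : 0 ≤ (v ⬝ᵥ A *ᵥ u) ^ 2 / (u ⬝ᵥ A *ᵥ u) := by positivity
    have hlow := dotProduct_mulVec_le_of_le hAG (perpProj A u v)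
    have hup := dotProduct_mulVec_le_of_le hGA (perpProj A u v)
    simp only [smul_mulVec, dotProduct_smul, smul_eq_mul] at hup ⊢
    rw [dotProduct_DFPupd_mulVec hG hr.ne',
      hA.isHermitian.dotProduct_mulVec_eq_perpProj_add hr.ne' v]
    nlinarith

lemma BFGSupd_mem_Icc (hA : A.PosDef) (hAG : A ≤ G) (hGA : G ≤ η • A) (hη : 1 ≤ η)
    (hu : u ≠ 0) : BFGSupd A G u ∈ Set.Icc A (η • A) := by
  have hG := hA.isHermitian.of_le hAG
  have hr : 0 < u ⬝ᵥ A *ᵥ u := by simpa using hA.dotProduct_mulVec_pos hu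
  have hq : 0 < u ⬝ᵥ G *ᵥ u := hr.trans_le (dotProduct_mulVec_le_of_le hAG u)
  have hBFGS := BFGSupd_isHermitian (A := A) (u := u) hG
  refine ⟨le_of_dotProduct_mulVec_le hA.isHermitian hBFGS fun v => ?_,
    le_of_dotProduct_mulVec_le hBFGS (hA.isHermitian.smul (.all η)) fun v => ?_⟩
  · have hproj := hA.isHermitian.dotProduct_perpProj_le hr v
      ((v ⬝ᵥ G *ᵥ u) / (u ⬝ᵥ G *ᵥ u))
    have hle := dotProduct_mulVec_le_of_le hAG (perpProj G u v)
    rw [dotProduct_BFGSupd_mulVec hG hq.ne',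
      hA.isHermitian.dotProduct_mulVec_eq_perpProj_add hr.ne' v]
    rw [← perpProj] at hproj
    linarith
  · have hsq : 0 ≤ (v ⬝ᵥ A *ᵥ u) ^ 2 / (u ⬝ᵥ A *ᵥ u) := by positivity
    have hproj := hG.dotProduct_perpProj_le hq v ((v ⬝ᵥ A *ᵥ u) / (u ⬝ᵥ A *ᵥ u))
    have hup := dotProduct_mulVec_le_of_le hGA (perpProj A u v)
    rw [← perpProj] at hproj
    simp only [smul_mulVec, dotProduct_smul, smul_eq_mul] at hup ⊢
    rw [dotProduct_BFGSupd_mulVec hG hq.ne',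
      hA.isHermitian.dotProduct_mulVec_eq_perpProj_add hr.ne' v]
    nlinarith

lemma Broyd_mem_Icc (hA : A.PosDef) (hAG : A ≤ G) (hGA : G ≤ η • A) (hη : 1 ≤ η) {φ : ℝ}
    (hφ : φ ∈ Set.Icc (0 : ℝ) 1) (u : Fin n → ℝ) : Broyd φ A G u ∈ Set.Icc A (η • A) := by
  rw [Broyd]
  split_ifs with hu
  · exact ⟨hAG, hGA⟩
  · exact convex_Icc A (η • A) (DFPupd_mem_Icc hA hAG hGA hη hu)
      (BFGSupd_mem_Icc hA hAG hGA hη hu) hφ.1 (sub_nonneg.mpr hφ.2) (by ring)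

end Updates

/-- With `r = uᵀAu`, `q = uᵀGu`, `D = uᵀGA⁻¹Gu` and `N = uᵀ(G - A)A⁻¹(G - A)u`, the terms
`q / r - 1` and `D / q - 1` are the trace decrements of the DFP and BFGS updates, and
`N / D = θ²`. -/
lemma broyden_gain_le {r q D N η φ : ℝ} (hr : 0 < r) (hrq : r ≤ q) (hCS : q ^ 2 ≤ r * D)
    (hN : N = D - 2 * q + r) (hNη : N ≤ (η - 1) * (q - r)) (hη : 1 ≤ η)
    (hφ : φ ∈ Set.Icc (0 : ℝ) 1) :
    (φ * η⁻¹ + 1 - φ) * (N / D) ≤ φ * (q / r - 1) + (1 - φ) * (D / q - 1) := by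
  have hq : 0 < q := hr.trans_le hrq
  have hD : 0 < D := by nlinarith
  have hrD : r ≤ D := by nlinarith
  have hN0 : 0 ≤ N := by nlinarith
  have hη' : 0 ≤ η⁻¹ := by positivity
  have hBFGS : N / D ≤ D / q - 1 := by
    have hgap : D / q - 1 - N / D = ((D - q) ^ 2 + q * (q - r)) / (q * D) := by
      rw [hN]; field_simp; ring
    have : 0 ≤ ((D - q) ^ 2 + q * (q - r)) / (q * D) := by
      apply div_nonneg _ (by positivity); nlinarith
    linarith
  have hDFP : η⁻¹ * (N / D) ≤ q / r - 1 :=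
    calc η⁻¹ * (N / D) ≤ η⁻¹ * (N / r) := by gcongr
      _ ≤ η⁻¹ * ((η - 1) * (q - r) / r) := by gcongr
      _ = (1 - η⁻¹) * (q / r - 1) := by field_simp
      _ ≤ q / r - 1 :=
        mul_le_of_le_one_left (by rw [sub_nonneg, one_le_div hr]; exact hrq) (by linarith)
  calc (φ * η⁻¹ + 1 - φ) * (N / D) = φ * (η⁻¹ * (N / D)) + (1 - φ) * (N / D) := by ring
    _ ≤ φ * (q / r - 1) + (1 - φ) * (D / q - 1) :=
      add_le_add (mul_le_mul_of_nonneg_left hDFP hφ.1)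
        (mul_le_mul_of_nonneg_left hBFGS (sub_nonneg.mpr hφ.2))

section TracePotential

variable {n : ℕ} {A G : Matrix (Fin n) (Fin n) ℝ} {u : Fin n → ℝ} {η : ℝ}

lemma sigmaPot_eq (hA : IsUnit A.det) (G : Matrix (Fin n) (Fin n) ℝ) :
    sigmaPot A G = (A⁻¹ * G).trace - n := by
  rw [sigmaPot, Matrix.mul_sub, trace_sub, nonsing_inv_mul A hA, trace_one, Fintype.card_fin]

lemma sigmaPot_nonneg (hA : A.PosDef) (hAG : A ≤ G) : 0 ≤ sigmaPot A G :=
  trace_inv_mul_nonneg hA (sub_nonneg.mpr hAG)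

lemma sigmaPot_le (hA : A.PosDef) (hGA : G ≤ η • A) : sigmaPot A G ≤ n * (η - 1) := by
  have hdet := (isUnit_iff_isUnit_det A).mp hA.isUnit
  have h := trace_inv_mul_nonneg hA (sub_nonneg.mpr hGA)
  rw [Matrix.mul_sub, trace_sub, Matrix.mul_smul, nonsing_inv_mul A hdet, trace_smul, trace_one,
    Fintype.card_fin, smul_eq_mul] at h
  rw [sigmaPot_eq hdet]
  linarith

lemma trace_inv_mul_DFPupd (hA : A.PosDef) (hu : u ⬝ᵥ A *ᵥ u ≠ 0) :
    (A⁻¹ * DFPupd A G u).trace = (A⁻¹ * G).trace - (u ⬝ᵥ G *ᵥ u) / (u ⬝ᵥ A *ᵥ u) + 1 := by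
  have hdet := (isUnit_iff_isUnit_det A).mp hA.isUnit
  have hcross : (A⁻¹ *ᵥ (G *ᵥ u)) ⬝ᵥ (A *ᵥ u) = u ⬝ᵥ G *ᵥ u := by
    rw [dotProduct_comm, hA.inv.isHermitian.dotProduct_mulVec_comm,
      inv_mulVec_mulVec_cancel hdet, dotProduct_comm]
  simp only [DFPupd, Matrix.mul_add, Matrix.mul_sub, Matrix.mul_smul, trace_add, trace_sub,
    trace_smul, mul_vecMulVec, trace_vecMulVec, inv_mulVec_mulVec_cancel hdet, hcross,
    smul_eq_mul]
  field_simp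
  ring

lemma trace_inv_mul_BFGSupd (hA : A.PosDef) (hu : u ⬝ᵥ A *ᵥ u ≠ 0) :
    (A⁻¹ * BFGSupd A G u).trace
      = (A⁻¹ * G).trace - ((G *ᵥ u) ⬝ᵥ A⁻¹ *ᵥ (G *ᵥ u)) / (u ⬝ᵥ G *ᵥ u) + 1 := by
  have hdet := (isUnit_iff_isUnit_det A).mp hA.isUnit
  simp only [BFGSupd, Matrix.mul_add, Matrix.mul_sub, Matrix.mul_smul, trace_add, trace_sub,
    trace_smul, mul_vecMulVec, trace_vecMulVec, inv_mulVec_mulVec_cancel hdet,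
    dotProduct_comm (A⁻¹ *ᵥ _), smul_eq_mul]
  field_simp

lemma theta_eq (hA : A.IsHermitian) (hG : G.IsHermitian) (hu : u ≠ 0) :
    theta A G u = √(((G - A) *ᵥ u) ⬝ᵥ A⁻¹ *ᵥ ((G - A) *ᵥ u) / ((G *ᵥ u) ⬝ᵥ A⁻¹ *ᵥ (G *ᵥ u))) := by
  rw [theta, if_neg hu, (hG.sub hA).dotProduct_mul_mul_mulVec, hG.dotProduct_mul_mul_mulVec]

lemma theta_nonneg (A G : Matrix (Fin n) (Fin n) ℝ) (u : Fin n → ℝ) : 0 ≤ theta A G u := by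
  rw [theta]
  split_ifs <;> positivity

lemma sigmaPot_Broyd_le (hA : A.PosDef) (hAG : A ≤ G) (hGA : G ≤ η • A) (hη : 1 ≤ η) {φ : ℝ}
    (hφ : φ ∈ Set.Icc (0 : ℝ) 1) (u : Fin n → ℝ) :
    sigmaPot A (Broyd φ A G u) ≤ sigmaPot A G - (φ * η⁻¹ + 1 - φ) * theta A G u ^ 2 := by
  rcases eq_or_ne u 0 with rfl | hu
  · simp [Broyd, theta]
  have hdet := (isUnit_iff_isUnit_det A).mp hA.isUnit
  have hG := hA.isHermitian.of_le hAG
  have hAinv := hA.inv.posSemidef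
  have hr : 0 < u ⬝ᵥ A *ᵥ u := by simpa using hA.dotProduct_mulVec_pos hu
  have hGA' : (G *ᵥ u) ⬝ᵥ A⁻¹ *ᵥ (A *ᵥ u) = u ⬝ᵥ G *ᵥ u := by
    rw [inv_mulVec_mulVec_cancel hdet, dotProduct_comm]
  have hAG' : (A *ᵥ u) ⬝ᵥ A⁻¹ *ᵥ (G *ᵥ u) = u ⬝ᵥ G *ᵥ u := by
    rw [hAinv.isHermitian.dotProduct_mulVec_comm, hGA']
  have hAA' : (A *ᵥ u) ⬝ᵥ A⁻¹ *ᵥ (A *ᵥ u) = u ⬝ᵥ A *ᵥ u := by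
    rw [inv_mulVec_mulVec_cancel hdet, dotProduct_comm]
  have hCS := hAinv.dotProduct_mulVec_sq_le (A *ᵥ u) (G *ᵥ u)
  rw [hAG', hAA'] at hCS
  have hN : ((G - A) *ᵥ u) ⬝ᵥ A⁻¹ *ᵥ ((G - A) *ᵥ u)
      = (G *ᵥ u) ⬝ᵥ A⁻¹ *ᵥ (G *ᵥ u) - 2 * (u ⬝ᵥ G *ᵥ u) + u ⬝ᵥ A *ᵥ u := by
    simp only [sub_mulVec, mulVec_sub, dotProduct_sub, sub_dotProduct, hGA', hAG', hAA']
    ring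
  have hNη := dotProduct_inv_mulVec_le hA (sub_nonneg.mpr hAG) (sub_nonneg.mpr hη)
    (by rw [sub_smul, one_smul]; exact sub_le_sub_right hGA A) u
  rw [show u ⬝ᵥ (G - A) *ᵥ u = u ⬝ᵥ G *ᵥ u - u ⬝ᵥ A *ᵥ u by rw [sub_mulVec, dotProduct_sub]]
    at hNη
  have hN0 := hAinv.dotProduct_mulVec_self_nonneg ((G - A) *ᵥ u)
  have hD0 := hAinv.dotProduct_mulVec_self_nonneg (G *ᵥ u)
  rw [sigmaPot_eq hdet, sigmaPot_eq hdet, Broyd, if_neg hu, Matrix.mul_add, Matrix.mul_smul,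
    Matrix.mul_smul, trace_add, trace_smul, trace_smul, trace_inv_mul_DFPupd hA hr.ne',
    trace_inv_mul_BFGSupd hA hr.ne', theta_eq hA.isHermitian hG hu,
    Real.sq_sqrt (div_nonneg hN0 hD0), smul_eq_mul, smul_eq_mul]
  have := broyden_gain_le hr (dotProduct_mulVec_le_of_le hAG u) hCS hN hNη hη hφ
  linarith

end TracePotential

lemma lamQ_newton_step {n : ℕ} {A G : Matrix (Fin n) (Fin n) ℝ} (hA : A.PosDef) (hG : G.PosDef)
    {b x x' : Fin n → ℝ} (hx' : x' = x - G⁻¹ *ᵥ (A *ᵥ x - b)) :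
    lamQ A b x' = theta A G (x' - x) * lamQ A b x := by
  have hGdet := (isUnit_iff_isUnit_det G).mp hG.isUnit
  have hGu : G *ᵥ (x' - x) = -(A *ᵥ x - b) := by
    rw [hx', sub_sub_cancel_left, mulVec_neg, mulVec_mulVec, mul_nonsing_inv G hGdet, one_mulVec]
  have hgrad : A *ᵥ x' - b = -((G - A) *ᵥ (x' - x)) := by
    rw [sub_mulVec, hGu, mulVec_sub]
    abel
  set u := x' - x
  have hlam : lamQ A b x = √((G *ᵥ u) ⬝ᵥ A⁻¹ *ᵥ (G *ᵥ u)) := by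
    rw [lamQ, hGu, mulVec_neg, dotProduct_neg, neg_dotProduct, neg_neg]
  have hlam' : lamQ A b x' = √(((G - A) *ᵥ u) ⬝ᵥ A⁻¹ *ᵥ ((G - A) *ᵥ u)) := by
    rw [lamQ, hgrad, mulVec_neg, dotProduct_neg, neg_dotProduct, neg_neg]
  rcases eq_or_ne u 0 with hu | hu
  · simp [hlam', hu, theta]
  have hD : 0 < (G *ᵥ u) ⬝ᵥ A⁻¹ *ᵥ (G *ᵥ u) := by
    simpa using hA.inv.dotProduct_mulVec_pos
      ((mulVec_injective_of_isUnit hG.isUnit).ne hu |>.trans_eq (mulVec_zero G))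
  rw [theta_eq hA.isHermitian hG.isHermitian hu, hlam, hlam',
    ← Real.sqrt_mul (div_nonneg (hA.inv.posSemidef.dotProduct_mulVec_self_nonneg _) hD.le),
    div_mul_cancel₀ _ hD.ne']

lemma Finset.prod_le_pow_card_of_sum_le {ι : Type*} (s : Finset ι) {z : ι → ℝ}
    (hz : ∀ i ∈ s, 0 ≤ z i) {S : ℝ} (hS : ∑ i ∈ s, z i ≤ S) :
    ∏ i ∈ s, z i ≤ (S / s.card) ^ s.card := by
  rcases s.eq_empty_or_nonempty with rfl | hs
  · simp
  have hk : (s.card : ℝ) ≠ 0 := by exact_mod_cast hs.card_pos.ne'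
  have hamgm := Real.geom_mean_le_arith_mean s (fun _ => 1) z (fun _ _ => zero_le_one)
    (by simpa using hs) hz
  simp only [Real.rpow_one, one_mul, Finset.sum_const, nsmul_eq_mul, mul_one] at hamgm
  calc ∏ i ∈ s, z i = ((∏ i ∈ s, z i) ^ (s.card⁻¹ : ℝ)) ^ s.card :=
        (Real.rpow_inv_natCast_pow (Finset.prod_nonneg hz) (by exact_mod_cast hk)).symm
    _ ≤ (S / s.card) ^ s.card := by
        gcongr
        · exact Real.rpow_nonneg (Finset.prod_nonneg hz) _
        · exact hamgm.trans (by gcongr)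

lemma prod_le_of_sum_mul_sq_le {k : ℕ} {c θ : ℕ → ℝ} (hc : ∀ i, 0 < c i) (hθ : ∀ i, 0 ≤ θ i)
    {S : ℝ} (hS : ∑ i ∈ Finset.range k, c i * θ i ^ 2 ≤ S) :
    ∏ i ∈ Finset.range k, θ i
      ≤ 1 / √(∏ i ∈ Finset.range k, c i) * (S / k) ^ ((k : ℝ) / 2) := by
  have hS0 : 0 ≤ S / k :=
    div_nonneg ((Finset.sum_nonneg fun i _ => by have := hc i; positivity).trans hS) k.cast_nonneg
  have hP : 0 < ∏ i ∈ Finset.range k, c i := Finset.prod_pos fun i _ => hc i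
  have hamgm := Finset.prod_le_pow_card_of_sum_le (Finset.range k)
    (fun i _ => by have := hc i; positivity) hS
  rw [Finset.prod_mul_distrib, Finset.prod_pow, Finset.card_range] at hamgm
  rw [one_div_mul_eq_div, le_div_iff₀ (Real.sqrt_pos.mpr hP), ← Real.sqrt_sq
    (Finset.prod_nonneg fun i _ => hθ i), ← Real.sqrt_mul' _ hP.le, mul_comm,
    Real.rpow_div_two_eq_sqrt _ hS0, Real.rpow_natCast, Real.sqrt_le_iff]
  refine ⟨by positivity, ?_⟩
  rw [pow_right_comm, Real.sq_sqrt hS0]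
  linarith

lemma smul_mem_Icc_of_le_of_le {n : ℕ} {A B : Matrix (Fin n) (Fin n) ℝ} {μ L : ℝ} (hμ : 0 < μ)
    (hL : 0 ≤ L) (hμB : μ • B ≤ A) (hLB : A ≤ L • B) : L • B ∈ Set.Icc A ((L / μ) • A) := by
  refine ⟨hLB, ?_⟩
  calc L • B = (L / μ) • (μ • B) := by rw [smul_smul, div_mul_cancel₀ _ hμ.ne']
    _ ≤ (L / μ) • A := smul_le_smul_of_nonneg_left hμB (by positivity)

lemma broyden_weight_pos {φ ω : ℝ} (hφ : φ ∈ Set.Icc (0 : ℝ) 1) (hω : 0 < ω) (hω1 : ω ≤ 1) :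
    0 < φ * ω + 1 - φ := by
  nlinarith [hφ.1, mul_nonneg (sub_nonneg.mpr hφ.2) (sub_nonneg.mpr hω1)]

section Iterates

variable {n : ℕ} {A : Matrix (Fin n) (Fin n) ℝ} {G : ℕ → Matrix (Fin n) (Fin n) ℝ}
  {u : ℕ → Fin n → ℝ} {φ : ℕ → ℝ} {η : ℝ}

lemma Broyd_iterate_mem_Icc (hA : A.PosDef) (hη : 1 ≤ η) (hG0 : G 0 ∈ Set.Icc A (η • A))
    (hφ : ∀ k, φ k ∈ Set.Icc (0 : ℝ) 1) (hupd : ∀ k, G (k + 1) = Broyd (φ k) A (G k) (u k))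
    (k : ℕ) : G k ∈ Set.Icc A (η • A) := by
  induction k with
  | zero => exact hG0
  | succ k ih => exact hupd k ▸ Broyd_mem_Icc hA ih.1 ih.2 hη (hφ k) _

lemma sum_mul_theta_sq_le (hA : A.PosDef) (hη : 1 ≤ η) (hG : ∀ k, G k ∈ Set.Icc A (η • A))
    (hφ : ∀ k, φ k ∈ Set.Icc (0 : ℝ) 1) (hupd : ∀ k, G (k + 1) = Broyd (φ k) A (G k) (u k))
    (k : ℕ) :
    ∑ i ∈ Finset.range k, (φ i * η⁻¹ + 1 - φ i) * theta A (G i) (u i) ^ 2 ≤ n * (η - 1) :=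
  calc _ ≤ ∑ i ∈ Finset.range k, (sigmaPot A (G i) - sigmaPot A (G (i + 1))) :=
        Finset.sum_le_sum fun i _ => by
          have := sigmaPot_Broyd_le hA (hG i).1 (hG i).2 hη (hφ i) (u i)
          rw [← hupd i] at this
          linarith
    _ = sigmaPot A (G 0) - sigmaPot A (G k) := Finset.sum_range_sub' _ _
    _ ≤ n * (η - 1) := by
        linarith [sigmaPot_nonneg hA (hG k).1, sigmaPot_le hA (hG 0).2]

lemma lamQ_eq_prod_theta (hA : A.PosDef) (hG : ∀ k, (G k).PosDef) {b : Fin n → ℝ}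
    {x : ℕ → Fin n → ℝ} (hstep : ∀ k, x (k + 1) = x k - (G k)⁻¹ *ᵥ (A *ᵥ x k - b)) (k : ℕ) :
    lamQ A b (x k) = (∏ i ∈ Finset.range k, theta A (G i) (x (i + 1) - x i)) * lamQ A b (x 0) := by
  induction k with
  | zero => simp
  | succ k ih =>
    rw [Finset.prod_range_succ, lamQ_newton_step hA (hG k) (hstep k), ih]
    ring

end Iterates

theorem quad_superlinear_convergence_general {n : ℕ} (A B : Matrix (Fin n) (Fin n) ℝ)
    (hA : A.PosDef) (μ L : ℝ) (hμ : 0 < μ) (hμL : μ ≤ L)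
    (hml : (A - μ • B).PosSemidef) (hmu : (L • B - A).PosSemidef)
    (b : Fin n → ℝ) (x : ℕ → Fin n → ℝ) (G : ℕ → Matrix (Fin n) (Fin n) ℝ)
    (φ : ℕ → ℝ) (hφ : ∀ k, φ k ∈ Set.Icc (0 : ℝ) 1)
    (hG0 : G 0 = L • B)
    (hstep : ∀ k, x (k + 1) = x k - (G k)⁻¹.mulVec (A.mulVec (x k) - b))
    (hupd : ∀ k, G (k + 1) = Broyd (φ k) A (G k) (x (k + 1) - x k)) :
    ∀ k : ℕ, 1 ≤ k →
      (lamQ A b (x k) ≤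
        (1 / Real.sqrt (∏ i ∈ Finset.range k, (φ i * (μ / L) + 1 - φ i))) *
          ((n * L / (μ * k)) ^ ((k : ℝ) / 2)) * lamQ A b (x 0)) ∧
      ((∀ i, φ i = 0) →
        lamQ A b (x k) ≤ ((n * L / (μ * k)) ^ ((k : ℝ) / 2)) * lamQ A b (x 0)) := by
  have hL : 0 < L := hμ.trans_le hμL
  have hη : 1 ≤ L / μ := (one_le_div hμ).mpr hμL
  have hG := Broyd_iterate_mem_Icc hA hη (hG0 ▸ smul_mem_Icc_of_le_of_le hμ hL.le hml hmu) hφ hupd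
  have hsum := sum_mul_theta_sq_le hA hη hG hφ hupd
  simp only [inv_div] at hsum
  intro k _
  have hS : ∑ i ∈ Finset.range k, (φ i * (μ / L) + 1 - φ i) * theta A (G i) (x (i + 1) - x i) ^ 2
      ≤ n * (L / μ) := (hsum k).trans (by gcongr; linarith)
  have hmain := (lamQ_eq_prod_theta hA (fun k => hA.of_le (hG k).1) hstep k).trans_le <|
    mul_le_mul_of_nonneg_right
      (prod_le_of_sum_mul_sq_le
        (fun i => broyden_weight_pos (hφ i) (div_pos hμ hL) ((div_le_one hL).mpr hμL))
        (fun i => theta_nonneg _ _ _) hS)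
      (Real.sqrt_nonneg _)
  rw [show (n : ℝ) * (L / μ) / k = n * L / (μ * k) by ring] at hmain
  exact ⟨hmain, fun hφ0 => by simpa [hφ0] using hmain⟩

theorem quad_superlinear_convergence {n : ℕ} (A B : Matrix (Fin n) (Fin n) ℝ)
    (hA : A.PosDef) (hB : B.PosDef) (μ L : ℝ) (hμ : 0 < μ) (hμL : μ ≤ L)
    (hml : (A - μ • B).PosSemidef) (hmu : (L • B - A).PosSemidef)
    (b : Fin n → ℝ) (x : ℕ → Fin n → ℝ) (G : ℕ → Matrix (Fin n) (Fin n) ℝ)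
    (φ : ℕ → ℝ) (hφ : ∀ k, φ k ∈ Set.Icc (0 : ℝ) 1)
    (hG0 : G 0 = L • B)
    (hstep : ∀ k, x (k + 1) = x k - (G k)⁻¹.mulVec (A.mulVec (x k) - b))
    (hupd : ∀ k, G (k + 1) = Broyd (φ k) A (G k) (x (k + 1) - x k)) :
    ∀ k : ℕ, 1 ≤ k →
      (lamQ A b (x k) ≤
        (1 / Real.sqrt (∏ i ∈ Finset.range k, (φ i * (μ / L) + 1 - φ i))) *
          ((n * L / (μ * k)) ^ ((k : ℝ) / 2)) * lamQ A b (x 0)) ∧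
      ((∀ i, φ i = 0) →
        lamQ A b (x k) ≤ ((n * L / (μ * k)) ^ ((k : ℝ) / 2)) * lamQ A b (x 0)) :=
  quad_superlinear_convergence_general A B hA μ L hμ hμL hml hmu b x G φ hφ hG0 hstep hupd
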